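/- arXiv:1903.00244 — 2 statements merged into one kernel-verified Lean document; each statement's English description precedes it below -/
import Mathlib

section
/- Assume the coercivity condition (C) and the monotonicity assumption (M). Let λ > 0, let (z,k) ∈ 𝕋ⁿ×𝕀, and let v^λ be the unique viscosity solution of (P_λ). Then for every ν ∈ G'(z,k,λ) one has ⟨ν, L⟩ ≥ v^λ_k(z). -/
open MeasureTheory Filter Topology RealInnerProductSpace

noncomputable section

/-- Euclidean space ℝⁿ, the universal cover of the flat torus 𝕋ⁿ = ℝⁿ/ℤⁿ. -/
abbrev Euc (n : ℕ) := EuclideanSpace ℝ (Fin n)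

/-- A vector of ℝⁿ with integer coordinates (an element of ℤⁿ). -/
def IsIntVec {n : ℕ} (z : Euc n) : Prop := ∀ i, ∃ k : ℤ, z i = (k : ℝ)

/-- ℤⁿ-periodic functions on ℝⁿ: these represent functions on the torus 𝕋ⁿ. -/
def TorusFun {n : ℕ} {α : Type*} (f : Euc n → α) : Prop :=
  ∀ (x z : Euc n), IsIntVec z → f (x + z) = f x

/-- Functions on 𝕋ⁿ × Ξ, i.e. ℤⁿ-periodic in the first variable. -/
def TorusFun2 {n : ℕ} {Ξ : Type*} {α : Type*} (f : Euc n × Ξ → α) : Prop :=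
  ∀ (x z : Euc n) (ξ : Ξ), IsIntVec z → f (x + z, ξ) = f (x, ξ)

/-- The Hamiltonian H_{φ,i}(x,p) = sup_{ξ∈Ξ} (−g_i(x,ξ)·p − φ_i(x,ξ)). -/
def ham {n m : ℕ} {Ξ : Type*} (g : Fin m → Euc n × Ξ → Euc n)
    (φ : Fin m → Euc n × Ξ → ℝ) (i : Fin m) (x p : Euc n) : ℝ :=
  ⨆ ξ : Ξ, (-⟪g i (x, ξ), p⟫ - φ i (x, ξ))

/-- The data g = (g_i), L = (L_i) consist of continuous functions on 𝕋ⁿ × Ξ. -/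
def GoodData {n m : ℕ} {Ξ : Type*} [TopologicalSpace Ξ]
    (g : Fin m → Euc n × Ξ → Euc n) (L : Fin m → Euc n × Ξ → ℝ) : Prop :=
  (∀ i, Continuous (g i) ∧ TorusFun2 (g i)) ∧ (∀ i, Continuous (L i) ∧ TorusFun2 (L i))

/-- Coercivity (C): min_{x∈𝕋ⁿ} H_i(x,p) → ∞ as |p| → ∞. -/
def Coercive {n m : ℕ} {Ξ : Type*} (g : Fin m → Euc n × Ξ → Euc n)
    (L : Fin m → Euc n × Ξ → ℝ) : Prop :=
  ∀ (i : Fin m) (M : ℝ), ∃ R : ℝ, ∀ p : Euc n, R ≤ ‖p‖ → ∀ x : Euc n, M ≤ ham g L i x p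

/-- A monotone m×m real matrix. -/
def IsMonotoneMat {m : ℕ} (B : Matrix (Fin m) (Fin m) ℝ) : Prop :=
  ∀ (u : Fin m → ℝ) (k : Fin m), (∀ i, u i ≤ u k) → 0 ≤ u k → 0 ≤ ∑ j, B k j * u j

/-- Assumption (M): B(x) has continuous entries (as functions on 𝕋ⁿ) and is monotone
for every x. -/
def GoodCoupling {n m : ℕ} (B : Euc n → Matrix (Fin m) (Fin m) ℝ) : Prop :=
  (∀ i j, Continuous (fun x => B x i j) ∧ TorusFun (fun x => B x i j)) ∧
    ∀ x, IsMonotoneMat (B x)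

/-- Viscosity subsolution of λu + Bu + H_φ[u] = c in 𝕋ⁿ. -/
def IsSubsol {n m : ℕ} {Ξ : Type*} (B : Euc n → Matrix (Fin m) (Fin m) ℝ) (lam : ℝ)
    (g : Fin m → Euc n × Ξ → Euc n) (φ : Fin m → Euc n × Ξ → ℝ)
    (c : Fin m → ℝ) (u : Fin m → Euc n → ℝ) : Prop :=
  (∀ i, UpperSemicontinuous (u i) ∧ TorusFun (u i)) ∧
    ∀ (i : Fin m) (ψ : Euc n → ℝ), ContDiff ℝ 1 ψ → TorusFun ψ →
      ∀ x : Euc n, IsLocalMax (fun y => u i y - ψ y) x →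
        lam * u i x + (∑ j, B x i j * u j x) + ham g φ i x (gradient ψ x) ≤ c i

/-- Viscosity supersolution of λu + Bu + H_φ[u] = c in 𝕋ⁿ. -/
def IsSupersol {n m : ℕ} {Ξ : Type*} (B : Euc n → Matrix (Fin m) (Fin m) ℝ) (lam : ℝ)
    (g : Fin m → Euc n × Ξ → Euc n) (φ : Fin m → Euc n × Ξ → ℝ)
    (c : Fin m → ℝ) (u : Fin m → Euc n → ℝ) : Prop :=
  (∀ i, LowerSemicontinuous (u i) ∧ TorusFun (u i)) ∧
    ∀ (i : Fin m) (ψ : Euc n → ℝ), ContDiff ℝ 1 ψ → TorusFun ψ →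
      ∀ x : Euc n, IsLocalMin (fun y => u i y - ψ y) x →
        c i ≤ lam * u i x + (∑ j, B x i j * u j x) + ham g φ i x (gradient ψ x)

/-- Viscosity solution of λu + Bu + H_φ[u] = c in 𝕋ⁿ. -/
def IsSol {n m : ℕ} {Ξ : Type*} (B : Euc n → Matrix (Fin m) (Fin m) ℝ) (lam : ℝ)
    (g : Fin m → Euc n × Ξ → Euc n) (φ : Fin m → Euc n × Ξ → ℝ)
    (c : Fin m → ℝ) (u : Fin m → Euc n → ℝ) : Prop :=
  (∀ i, Continuous (u i)) ∧ IsSubsol B lam g φ c u ∧ IsSupersol B lam g φ c u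

/-- (φ,u) ∈ F(λ): φ ∈ C(𝕋ⁿ×Ξ)ᵐ, u ∈ C(𝕋ⁿ)ᵐ and u is a viscosity subsolution of
B^λ u + H_φ[u] = 0 in 𝕋ⁿ. -/
def memF {n m : ℕ} {Ξ : Type*} [TopologicalSpace Ξ]
    (B : Euc n → Matrix (Fin m) (Fin m) ℝ) (lam : ℝ)
    (g : Fin m → Euc n × Ξ → Euc n)
    (φ : Fin m → Euc n × Ξ → ℝ) (u : Fin m → Euc n → ℝ) : Prop :=
  (∀ i, Continuous (φ i) ∧ TorusFun2 (φ i)) ∧ (∀ i, Continuous (u i)) ∧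
    IsSubsol B lam g φ (fun _ => 0) u

/-- ρ_i(x) = Σ_j b_{ij}(x). -/
def rhoB {n m : ℕ} (B : Euc n → Matrix (Fin m) (Fin m) ℝ) (i : Fin m) (x : Euc n) : ℝ :=
  ∑ j, B x i j

/-- ν ∈ P_{B^λ}: a family of finite nonnegative Borel measures with ⟨ν, B^λ1⟩ = 1. -/
def memPB {n m : ℕ} {Ξ : Type*} [MeasurableSpace Ξ]
    (B : Euc n → Matrix (Fin m) (Fin m) ℝ) (lam : ℝ)
    (ν : Fin m → Measure (Euc n × Ξ)) : Prop :=
  (∀ i, IsFiniteMeasure (ν i)) ∧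
    (∑ i, ∫ q, (lam + rhoB B i q.1) ∂(ν i)) = 1

/-- ν ∈ G'(z,k,λ): ν ∈ P_{B^λ} and ⟨ν, φ − u_k(z) B^λ1⟩ ≥ 0 for every (φ,u) ∈ F(λ). -/
def memGP {n m : ℕ} {Ξ : Type*} [TopologicalSpace Ξ] [MeasurableSpace Ξ]
    (B : Euc n → Matrix (Fin m) (Fin m) ℝ) (lam : ℝ)
    (g : Fin m → Euc n × Ξ → Euc n) (z : Euc n) (k : Fin m)
    (ν : Fin m → Measure (Euc n × Ξ)) : Prop :=
  memPB B lam ν ∧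
    ∀ φ u, memF B lam g φ u →
      0 ≤ ∑ i, ∫ q, (φ i q - u k z * (lam + rhoB B i q.1)) ∂(ν i)

/-- μ ∈ P: a family of nonnegative Borel measures of total mass 1. -/
def memP {n m : ℕ} {Ξ : Type*} [MeasurableSpace Ξ]
    (μ : Fin m → Measure (Euc n × Ξ)) : Prop :=
  (∀ i, IsFiniteMeasure (μ i)) ∧ (∑ i, (μ i Set.univ).toReal) = 1

/-- μ ∈ P(z,k,λ): μ ∈ P and Σ_i ⟨μ_i, (λ+ρ_i)⁻¹ φ_i⟩ ≥ u_k(z) for all (φ,u) ∈ F(λ). -/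
def memPzk {n m : ℕ} {Ξ : Type*} [TopologicalSpace Ξ] [MeasurableSpace Ξ]
    (B : Euc n → Matrix (Fin m) (Fin m) ℝ) (lam : ℝ)
    (g : Fin m → Euc n × Ξ → Euc n) (z : Euc n) (k : Fin m)
    (μ : Fin m → Measure (Euc n × Ξ)) : Prop :=
  memP μ ∧
    ∀ φ u, memF B lam g φ u →
      u k z ≤ ∑ i, ∫ q, (lam + rhoB B i q.1)⁻¹ * φ i q ∂(μ i)

/-- μ ∈ P(0): μ ∈ P and ⟨μ,φ⟩ ≥ 0 for all (φ,u) ∈ F(0). -/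
def memP0 {n m : ℕ} {Ξ : Type*} [TopologicalSpace Ξ] [MeasurableSpace Ξ]
    (B : Euc n → Matrix (Fin m) (Fin m) ℝ)
    (g : Fin m → Euc n × Ξ → Euc n)
    (μ : Fin m → Measure (Euc n × Ξ)) : Prop :=
  memP μ ∧ ∀ φ u, memF B 0 g φ u → 0 ≤ ∑ i, ∫ q, φ i q ∂(μ i)

/-- μ ∈ M₊(0): a family of finite nonnegative Borel measures with ⟨μ,φ⟩ ≥ 0 for all
(φ,u) ∈ F(0). -/
def memM0 {n m : ℕ} {Ξ : Type*} [TopologicalSpace Ξ] [MeasurableSpace Ξ]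
    (B : Euc n → Matrix (Fin m) (Fin m) ℝ)
    (g : Fin m → Euc n × Ξ → Euc n)
    (μ : Fin m → Measure (Euc n × Ξ)) : Prop :=
  (∀ i, IsFiniteMeasure (μ i)) ∧ ∀ φ u, memF B 0 g φ u → 0 ≤ ∑ i, ∫ q, φ i q ∂(μ i)

/-- Assumption (E): problem (P₀) has a Lipschitz continuous viscosity solution. -/
def AssumptionE {n m : ℕ} {Ξ : Type*} (B : Euc n → Matrix (Fin m) (Fin m) ℝ)
    (g : Fin m → Euc n × Ξ → Euc n) (L : Fin m → Euc n × Ξ → ℝ) : Prop :=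
  ∃ v₀ : Fin m → Euc n → ℝ, (∀ i, ∃ K : NNReal, LipschitzWith K (v₀ i)) ∧
    IsSol B 0 g L (fun _ => 0) v₀

end


/-! Testing `ν ∈ G'(z,k,λ)` against the pair `(L, v^λ) ∈ F(λ)` gives
`0 ≤ ⟨ν, L⟩ - v^λ_k(z) ⟨ν, B^λ1⟩ = ⟨ν, L⟩ - v^λ_k(z)`; the only analytic input is that continuous
ℤⁿ-periodic functions are bounded, hence integrable against the finite measures `ν_i`. -/

def unitCube (n : ℕ) : Set (Euc n) :=
  (EuclideanSpace.equiv (Fin n) ℝ).symm '' Set.univ.pi fun _ => Set.Icc 0 1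

lemma isCompact_unitCube (n : ℕ) : IsCompact (unitCube n) :=
  (isCompact_univ_pi fun _ => isCompact_Icc).image
    (EuclideanSpace.equiv (Fin n) ℝ).symm.continuous

lemma exists_isIntVec_add_mem_unitCube {n : ℕ} (x : Euc n) :
    ∃ z : Euc n, IsIntVec z ∧ x + z ∈ unitCube n := by
  refine ⟨(EuclideanSpace.equiv (Fin n) ℝ).symm fun i => -(⌊x i⌋ : ℝ), fun i => ⟨-⌊x i⌋, by simp⟩,
    fun i => Int.fract (x i), fun i _ => ⟨Int.fract_nonneg _, (Int.fract_lt_one _).le⟩, ?_⟩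
  ext i
  simp [Int.fract, sub_eq_add_neg]

lemma TorusFun.comp_fst {n : ℕ} {Ξ α : Type*} {f : Euc n → α} (hf : TorusFun f) :
    TorusFun2 fun q : Euc n × Ξ => f q.1 :=
  fun x z _ hz => hf x z hz

section Periodic

variable {n : ℕ} {Ξ : Type*} [TopologicalSpace Ξ]

lemma TorusFun2.exists_norm_le [CompactSpace Ξ] {E : Type*} [SeminormedAddCommGroup E]
    {f : Euc n × Ξ → E} (hf : TorusFun2 f) (hc : Continuous f) : ∃ C, ∀ q, ‖f q‖ ≤ C := by
  obtain ⟨C, hC⟩ :=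
    ((isCompact_unitCube n).prod isCompact_univ).exists_bound_of_continuousOn hc.continuousOn
  refine ⟨C, fun ⟨x, ξ⟩ => ?_⟩
  obtain ⟨z, hz, hxz⟩ := exists_isIntVec_add_mem_unitCube x
  rw [← hf x z ξ hz]
  exact hC _ ⟨hxz, Set.mem_univ ξ⟩

lemma TorusFun2.integrable [CompactSpace Ξ] [MeasurableSpace Ξ]
    [OpensMeasurableSpace (Euc n × Ξ)] {f : Euc n × Ξ → ℝ} (hf : TorusFun2 f) (hc : Continuous f)
    (μ : Measure (Euc n × Ξ)) [IsFiniteMeasure μ] : Integrable f μ := by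
  obtain ⟨C, hC⟩ := hf.exists_norm_le hc
  exact .of_bound hc.aestronglyMeasurable C (.of_forall hC)

end Periodic

section Coupling

variable {n m : ℕ} {B : Euc n → Matrix (Fin m) (Fin m) ℝ}

lemma continuous_rhoB (hB : ∀ i j, Continuous fun x => B x i j) (i : Fin m) :
    Continuous (rhoB B i) :=
  continuous_finsetSum _ fun j _ => hB i j

lemma torusFun_rhoB (hB : ∀ i j, TorusFun fun x => B x i j) (i : Fin m) :
    TorusFun (rhoB B i) :=
  fun x z hz => Finset.sum_congr rfl fun j _ => hB i j x z hz

end Coupling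

lemma memF_of_isSol {n m : ℕ} {Ξ : Type*} [TopologicalSpace Ξ]
    {B : Euc n → Matrix (Fin m) (Fin m) ℝ} {lam : ℝ} {g : Fin m → Euc n × Ξ → Euc n}
    {φ : Fin m → Euc n × Ξ → ℝ} {u : Fin m → Euc n → ℝ}
    (hφ : ∀ i, Continuous (φ i) ∧ TorusFun2 (φ i)) (hu : IsSol B lam g φ (fun _ => 0) u) :
    memF B lam g φ u :=
  ⟨hφ, hu.1, hu.2.1⟩

lemma sum_integral_sub_const_mul {α : Type*} [MeasurableSpace α] {m : ℕ}
    {ν : Fin m → Measure α} {f w : Fin m → α → ℝ} (hf : ∀ i, Integrable (f i) (ν i))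
    (hw : ∀ i, Integrable (w i) (ν i)) (c : ℝ) :
    ∑ i, ∫ q, (f i q - c * w i q) ∂(ν i) =
      ∑ i, ∫ q, f i q ∂(ν i) - c * ∑ i, ∫ q, w i q ∂(ν i) := by
  simp only [integral_sub (hf _) ((hw _).const_mul c), integral_const_mul,
    Finset.sum_sub_distrib, Finset.mul_sum]

theorem stmt7_general {n m : ℕ}
    {Ξ : Type*} [MetricSpace Ξ] [CompactSpace Ξ]
    [MeasurableSpace Ξ] [BorelSpace Ξ]
    (g : Fin m → Euc n × Ξ → Euc n) (L : Fin m → Euc n × Ξ → ℝ)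
    (hgL : GoodData g L)
    (B : Euc n → Matrix (Fin m) (Fin m) ℝ) (hB : GoodCoupling B)
    (lam : ℝ) (z : Euc n) (k : Fin m)
    (v : Fin m → Euc n → ℝ) (hv : IsSol B lam g L (fun _ => 0) v) :
    ∀ ν : Fin m → Measure (Euc n × Ξ), memGP B lam g z k ν →
      v k z ≤ ∑ i, ∫ q, L i q ∂(ν i) := by
  rintro ν ⟨⟨hfin, hmass⟩, hG⟩
  have hL : ∀ i, Integrable (L i) (ν i) := fun i =>
    (hgL.2 i).2.integrable (hgL.2 i).1 (ν i)
  have hweight : ∀ i, Integrable (fun q : Euc n × Ξ => lam + rhoB B i q.1) (ν i) := fun i => by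
    have hper : TorusFun fun x => lam + rhoB B i x := fun x y hy => by
      simp only [torusFun_rhoB (fun i j => (hB.1 i j).2) i x y hy]
    have hcont : Continuous fun x => lam + rhoB B i x :=
      continuous_const.add (continuous_rhoB (fun i j => (hB.1 i j).1) i)
    exact hper.comp_fst.integrable (hcont.comp continuous_fst) (ν i)
  have htest := hG L v (memF_of_isSol hgL.2 hv)
  rw [sum_integral_sub_const_mul hL hweight, hmass] at htest
  linarith

theorem stmt7 {n m : ℕ} (hn : 0 < n) (hm : 0 < m)
    {Ξ : Type*} [MetricSpace Ξ] [CompactSpace Ξ] [Nonempty Ξ]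
    [MeasurableSpace Ξ] [BorelSpace Ξ]
    (g : Fin m → Euc n × Ξ → Euc n) (L : Fin m → Euc n × Ξ → ℝ)
    (hgL : GoodData g L) (hcoer : Coercive g L)
    (B : Euc n → Matrix (Fin m) (Fin m) ℝ) (hB : GoodCoupling B)
    (lam : ℝ) (hlam : 0 < lam) (z : Euc n) (k : Fin m)
    (v : Fin m → Euc n → ℝ) (hv : IsSol B lam g L (fun _ => 0) v) :
    ∀ ν : Fin m → Measure (Euc n × Ξ), memGP B lam g z k ν →
      v k z ≤ ∑ i, ∫ q, L i q ∂(ν i) :=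
  stmt7_general g L hgL B hB lam z k v hv
end

section
/- Assume the coercivity condition (C), the monotonicity assumption (M) and assumption (E). For λ > 0 let v^λ = (v^λ_i)_{i∈𝕀} be the unique viscosity solution of (P_λ). Then the family (v^λ)_{λ∈(0,1)} is equi-Lipschitz continuous on 𝕋ⁿ: there exists a constant C₁ > 0 such that for every λ ∈ (0,1) and every i ∈ 𝕀 the function v^λ_i is Lipschitz continuous on 𝕋ⁿ with Lipschitz constant at most C₁. -/
open MeasureTheory Filter Topology RealInnerProductSpace

/-!
Since `B` is monotone, `v₀ + C` and `v₀ - C`, with `C = max |v₀|`, are a super- and a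
subsolution of `(P_λ)`, so the comparison principle (which needs one of the two sides to be
Lipschitz) gives `|v^λ| ≤ 2C` for all `λ > 0`. For `λ ≤ 1`, coercivity then bounds, uniformly in
`λ`, the gradient of every test function touching `v^λ_i` from above, and testing against
periodic smoothed cones turns this viscosity gradient bound into a Lipschitz bound.
-/

open Real Set

section Torus

variable {n : ℕ}

lemma IsIntVec.neg {z : Euc n} (hz : IsIntVec z) : IsIntVec (-z) := fun j => by
  obtain ⟨k, hk⟩ := hz j
  exact ⟨-k, by simp [hk]⟩

def fundamentalCell (n : ℕ) : Set (Euc n) := {x | ∀ j, |x j| ≤ 1 / 2}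

lemma isCompact_fundamentalCell : IsCompact (fundamentalCell n) := by
  have h : fundamentalCell n = WithLp.toLp 2 '' univ.pi fun _ => Icc (-(1 / 2)) (1 / 2) := by
    ext x
    refine ⟨fun hx => ⟨x.ofLp, fun j _ => abs_le.1 (hx j), rfl⟩, ?_⟩
    rintro ⟨y, hy, rfl⟩ j
    exact abs_le.2 (hy j trivial)
  rw [h]
  exact (isCompact_univ_pi fun _ => isCompact_Icc).image (PiLp.continuous_toLp 2 _)

lemma exists_isIntVec_add_mem_fundamentalCell (x : Euc n) :
    ∃ z, IsIntVec z ∧ x + z ∈ fundamentalCell n := by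
  refine ⟨WithLp.toLp 2 fun j => ((-round (x j) : ℤ) : ℝ), fun j => ⟨_, rfl⟩, fun j => ?_⟩
  simpa [← sub_eq_add_neg] using abs_sub_round (x j)

lemma TorusFun.range_eq_image {α : Type*} {f : Euc n → α} (hf : TorusFun f) :
    range f = f '' fundamentalCell n := by
  refine (image_subset_range _ _).antisymm' ?_
  rintro _ ⟨x, rfl⟩
  obtain ⟨z, hz, hxz⟩ := exists_isIntVec_add_mem_fundamentalCell x
  exact ⟨x + z, hxz, hf x z hz⟩

lemma TorusFun.isCompact_range {α : Type*} [TopologicalSpace α] {f : Euc n → α}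
    (hf : TorusFun f) (hc : Continuous f) : IsCompact (range f) := by
  rw [hf.range_eq_image]
  exact isCompact_fundamentalCell.image hc

lemma TorusFun.exists_forall_le {f : Euc n → ℝ} (hf : TorusFun f) (hc : Continuous f) :
    ∃ x₀, ∀ x, f x ≤ f x₀ := by
  obtain ⟨_, ⟨x₀, rfl⟩, h⟩ := (hf.isCompact_range hc).exists_isGreatest (range_nonempty f)
  exact ⟨x₀, fun x => h ⟨x, rfl⟩⟩

lemma exists_abs_le_of_torusFun {ι : Type*} [Finite ι] {u : ι → Euc n → ℝ}
    (hc : ∀ i, Continuous (u i)) (hp : ∀ i, TorusFun (u i)) :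
    ∃ C, 0 ≤ C ∧ ∀ i x, |u i x| ≤ C := by
  obtain ⟨C, hC⟩ :=
    (isCompact_iUnion fun i => (hp i).isCompact_range (hc i)).isBounded.exists_norm_le
  exact ⟨max C 0, le_max_right _ _, fun i x =>
    (hC _ (mem_iUnion.2 ⟨i, x, rfl⟩)).trans (le_max_left _ _)⟩

lemma exists_max_doubled {ι : Type*} [Finite ι] [Nonempty ι] {F : ι → Euc n → Euc n → ℝ}
    (hc : ∀ i, Continuous fun q : Euc n × Euc n => F i q.1 q.2)
    (hx : ∀ i x y z, IsIntVec z → F i (x + z) y = F i x y)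
    (hy : ∀ i x y z, IsIntVec z → F i x (y + z) = F i x y) :
    ∃ k x₀ y₀, x₀ - y₀ ∈ fundamentalCell n ∧ ∀ i x y, F i x y ≤ F k x₀ y₀ := by
  set G : ι → Euc n × Euc n → ℝ := fun i q => F i q.1 (q.1 - q.2)
  have hG : IsCompact (⋃ i, G i '' (fundamentalCell n ×ˢ fundamentalCell n)) :=
    isCompact_iUnion fun i => (isCompact_fundamentalCell.prod isCompact_fundamentalCell).image
      ((hc i).comp (continuous_fst.prodMk (continuous_fst.sub continuous_snd)))
  obtain ⟨i₀⟩ := ‹Nonempty ι›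
  have h0 : (0 : Euc n) ∈ fundamentalCell n := by simp [fundamentalCell]
  obtain ⟨_, hmem, hgr⟩ := hG.exists_isGreatest ⟨G i₀ (0, 0), mem_iUnion.2 ⟨i₀, _, ⟨h0, h0⟩, rfl⟩⟩
  obtain ⟨k, ⟨x₀, a⟩, ⟨-, ha⟩, rfl⟩ := mem_iUnion.1 hmem
  refine ⟨k, x₀, x₀ - a, by simpa using ha, fun i x y => ?_⟩
  obtain ⟨z, hz, hxz⟩ := exists_isIntVec_add_mem_fundamentalCell x
  obtain ⟨w, hw, hw'⟩ := exists_isIntVec_add_mem_fundamentalCell (x + z - y)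
  have : F i x y = G i (x + z, x + z - y + w) := by
    simp only [G, hx, hz, show x + z - (x + z - y + w) = y + -w by abel, hy _ _ _ _ hw.neg]
  exact this ▸ hgr (mem_iUnion.2 ⟨i, _, ⟨hxz, hw'⟩, rfl⟩)

lemma TorusFun2.uniformContinuous {Ξ E : Type*} [PseudoMetricSpace Ξ] [CompactSpace Ξ]
    [PseudoMetricSpace E] {f : Euc n × Ξ → E} (hf : TorusFun2 f) (hc : Continuous f) :
    UniformContinuous f := by
  set K := Metric.cthickening 1 (fundamentalCell n) ×ˢ (univ : Set Ξ)
  have hK : UniformContinuousOn f K :=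
    (isCompact_fundamentalCell.cthickening.prod isCompact_univ).uniformContinuousOn_of_continuous
      hc.continuousOn
  rw [Metric.uniformContinuousOn_iff] at hK
  rw [Metric.uniformContinuous_iff]
  intro ε hε
  obtain ⟨δ, hδ, hKδ⟩ := hK ε hε
  refine ⟨min δ 1, by positivity, fun {p q} hpq => ?_⟩
  obtain ⟨z, hz, hxz⟩ := exists_isIntVec_add_mem_fundamentalCell p.1
  have hdist : dist (p.1 + z, p.2) (q.1 + z, q.2) = dist p q := by
    simp [Prod.dist_eq, dist_add_right]
  have hq : dist (q.1 + z) (p.1 + z) ≤ 1 := by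
    rw [dist_add_right, dist_comm]
    have : dist p.1 q.1 ≤ dist p q := by rw [Prod.dist_eq]; exact le_max_left _ _
    exact (this.trans_lt (hpq.trans_le (min_le_right _ _))).le
  have := hKδ (p.1 + z, p.2) ⟨Metric.self_subset_cthickening _ hxz, trivial⟩ (q.1 + z, q.2)
    ⟨Metric.mem_cthickening_of_dist_le _ _ _ _ hxz hq, trivial⟩
    (hdist ▸ hpq.trans_le (min_le_left _ _))
  rwa [hf p.1 z p.2 hz, hf q.1 z q.2 hz] at this

end Torus

section Penalty

variable {n : ℕ}

/-- A smooth `ℤⁿ`-periodic substitute for `|x|²`, comparable to the squared distance from `x`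
to `ℤⁿ`. -/
noncomputable def Phi (n : ℕ) (x : Euc n) : ℝ := ∑ j, (1 - cos (2 * π * x j))

noncomputable def gradPhi (n : ℕ) (x : Euc n) : Euc n :=
  WithLp.toLp 2 fun j => 2 * π * sin (2 * π * x j)

lemma Phi_nonneg (x : Euc n) : 0 ≤ Phi n x :=
  Finset.sum_nonneg fun _ _ => sub_nonneg.2 (cos_le_one _)

@[simp] lemma Phi_zero : Phi n 0 = 0 := by simp [Phi]

lemma torusFun_Phi : TorusFun (Phi n) := fun x z hz => by
  refine Finset.sum_congr rfl fun j _ => ?_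
  obtain ⟨k, hk⟩ := hz j
  rw [PiLp.add_apply, hk, mul_add, show 2 * π * (k : ℝ) = k * (2 * π) by ring,
    cos_add_int_mul_two_pi]

lemma Phi_neg (x : Euc n) : Phi n (-x) = Phi n x := by simp [Phi]

lemma gradPhi_neg (x : Euc n) : gradPhi n (-x) = -gradPhi n x := by
  ext j; simp [gradPhi]

lemma Phi_le (x : Euc n) : Phi n x ≤ 2 * π ^ 2 * ‖x‖ ^ 2 := by
  rw [EuclideanSpace.real_norm_sq_eq, Finset.mul_sum]
  refine Finset.sum_le_sum fun j _ => ?_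
  nlinarith [one_sub_sq_div_two_le_cos (x := 2 * π * x j)]

lemma le_Phi {x : Euc n} (hx : x ∈ fundamentalCell n) : 8 * ‖x‖ ^ 2 ≤ Phi n x := by
  rw [EuclideanSpace.real_norm_sq_eq, Finset.mul_sum]
  refine Finset.sum_le_sum fun j _ => ?_
  have h : |2 * π * x j| ≤ π := by
    rw [abs_mul, abs_of_pos (by positivity)]
    nlinarith [hx j, pi_pos]
  have := cos_le_one_sub_mul_cos_sq h
  field_simp at this
  nlinarith [pi_pos]

/-- Where `Φ ≤ 1` every `cos (2π xⱼ)` is nonnegative, so `sin² ≥ 1 - cos` termwise. -/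
lemma four_pi_sq_mul_Phi_le {x : Euc n} (hx : Phi n x ≤ 1) :
    4 * π ^ 2 * Phi n x ≤ ‖gradPhi n x‖ ^ 2 := by
  rw [EuclideanSpace.real_norm_sq_eq, Phi, Finset.mul_sum]
  refine Finset.sum_le_sum fun j _ => ?_
  have hj : 1 - cos (2 * π * x j) ≤ 1 :=
    (Finset.single_le_sum (fun i _ => sub_nonneg.2 (cos_le_one (2 * π * x i)))
      (Finset.mem_univ j)).trans hx
  simp only [gradPhi]
  nlinarith [sin_sq_add_cos_sq (2 * π * x j), cos_le_one (2 * π * x j), pi_pos]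

lemma hasGradientAt_Phi (x : Euc n) : HasGradientAt (Phi n) (gradPhi n x) x := by
  rw [hasGradientAt_iff_hasFDerivAt]
  have hsum : HasFDerivAt (Phi n)
      (∑ j, (2 * π * sin (2 * π * x j)) • EuclideanSpace.proj (𝕜 := ℝ) j) x := by
    refine HasFDerivAt.fun_sum fun j _ => ?_
    have hd : HasDerivAt (fun s => 1 - cos (2 * π * s)) (2 * π * sin (2 * π * x j)) (x j) := by
      simpa [mul_comm] using (((hasDerivAt_id (x j)).const_mul (2 * π)).cos).const_sub 1
    have hproj : HasFDerivAt (fun y : Euc n => y j) (EuclideanSpace.proj (𝕜 := ℝ) j) x :=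
      (EuclideanSpace.proj (𝕜 := ℝ) j).hasFDerivAt
    exact (hd.comp_hasFDerivAt x hproj :)
  refine hsum.congr_fderiv (ContinuousLinearMap.ext fun v => ?_)
  simp [gradPhi, PiLp.inner_apply, mul_comm]

lemma contDiff_Phi : ContDiff ℝ 1 (Phi n) := by
  refine ContDiff.sum fun j _ => contDiff_const.sub (contDiff_cos.comp (contDiff_const.mul ?_))
  exact (EuclideanSpace.proj (𝕜 := ℝ) j : Euc n →L[ℝ] ℝ).contDiff

variable {h : ℝ → ℝ} (y : Euc n)

lemma torusFun_comp_Phi_sub : TorusFun fun w => h (Phi n (w - y)) := fun w z hz => by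
  simp only [show w + z - y = w - y + z by abel, torusFun_Phi _ z hz]

lemma hasGradientAt_comp_Phi_sub {h' : ℝ} {x : Euc n} (hh : HasDerivAt h h' (Phi n (x - y))) :
    HasGradientAt (fun w => h (Phi n (w - y))) (h' • gradPhi n (x - y)) x := by
  have hshift : HasFDerivAt (fun w : Euc n => w - y) (ContinuousLinearMap.id ℝ (Euc n)) x :=
    (hasFDerivAt_id x).sub_const y
  have hPhi : HasFDerivAt (fun w => Phi n (w - y))
      ((InnerProductSpace.toDual ℝ (Euc n)) (gradPhi n (x - y))) x :=
    ((hasGradientAt_Phi (x - y)).hasFDerivAt.comp x hshift :)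
  rw [hasGradientAt_iff_hasFDerivAt, map_smul]
  exact hh.comp_hasFDerivAt x hPhi

lemma contDiff_comp_Phi_sub (hh : ∀ s, 0 ≤ s → ContDiffAt ℝ 1 h s) :
    ContDiff ℝ 1 fun w => h (Phi n (w - y)) := by
  have hPhi : ContDiff ℝ 1 fun w => Phi n (w - y) :=
    contDiff_Phi.comp (contDiff_id.sub contDiff_const)
  exact contDiff_iff_contDiffAt.2 fun w =>
    ((hh _ (Phi_nonneg (w - y))).comp w hPhi.contDiffAt :)

lemma hasGradientAt_Phi_sub_div (x₀ y₀ : Euc n) (ε : ℝ) :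
    HasGradientAt (fun x => Phi n (x - y₀) / ε) (ε⁻¹ • gradPhi n (x₀ - y₀)) x₀ := by
  simpa [div_eq_mul_inv, mul_comm] using
    hasGradientAt_comp_Phi_sub y₀ ((hasDerivAt_id (Phi n (x₀ - y₀))).div_const ε)

lemma hasGradientAt_neg_Phi_sub_div (x₀ y₀ : Euc n) (ε : ℝ) :
    HasGradientAt (fun y => -(Phi n (y - x₀) / ε)) (ε⁻¹ • gradPhi n (x₀ - y₀)) y₀ := by
  have := hasGradientAt_comp_Phi_sub x₀ (((hasDerivAt_id (Phi n (y₀ - x₀))).div_const ε).neg)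
  rwa [← neg_sub x₀ y₀, gradPhi_neg, smul_neg, neg_smul, neg_neg, one_div] at this

lemma norm_lt_of_Phi_lt {x : Euc n} {δ : ℝ} (hx : x ∈ fundamentalCell n) (hδ : 0 < δ)
    (h : Phi n x < 8 * δ ^ 2) : ‖x‖ < δ :=
  lt_of_pow_lt_pow_left₀ 2 hδ.le (by nlinarith [le_Phi hx])

end Penalty

section LipschitzGradient

variable {E : Type*} [NormedAddCommGroup E] [InnerProductSpace ℝ E] [CompleteSpace E]
  {u ψ : E → ℝ} {G x : E} {K : NNReal}

/-- Along the ray `x - t G`, `t ≥ 0`, the function `ψ + K ‖G‖ t` has a one-sided minimum at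
`t = 0`, so its right derivative `K ‖G‖ - ‖G‖²` is nonnegative. -/
lemma norm_le_of_isLocalMax_sub (hu : LipschitzWith K u) (hψ : HasGradientAt ψ G x)
    (hmax : IsLocalMax (fun y => u y - ψ y) x) : ‖G‖ ≤ K := by
  set φ : ℝ → ℝ := fun t => ψ (x + t • -G) + K * ‖G‖ * t
  have hline : HasDerivAt (fun t : ℝ => x + t • -G) (-G) 0 := by
    simpa using ((hasDerivAt_id (0 : ℝ)).smul_const (-G)).const_add x
  have hφ : HasDerivAt φ (-‖G‖ ^ 2 + K * ‖G‖) 0 := by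
    have hψ' : HasFDerivAt ψ ((InnerProductSpace.toDual ℝ E) G) (x + (0 : ℝ) • -G) := by
      simpa using hψ.hasFDerivAt
    have := (hψ'.comp_hasDerivAt 0 hline).add ((hasDerivAt_id (0 : ℝ)).const_mul (K * ‖G‖))
    refine this.congr_deriv ?_
    simp [inner_neg_right]
  have hmin : IsLocalMinOn φ (Ici 0) 0 := by
    have hx : Tendsto (fun t : ℝ => x + t • -G) (𝓝 0) (𝓝 x) := by
      simpa using hline.continuousAt.tendsto
    filter_upwards [nhdsWithin_le_nhds (hx.eventually hmax), self_mem_nhdsWithin]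
      with t ht (ht0 : 0 ≤ t)
    have hL := hu.dist_le_mul x (x + t • -G)
    rw [Real.dist_eq, dist_self_add_right, norm_smul, norm_neg, Real.norm_of_nonneg ht0] at hL
    simp only [φ, zero_smul, add_zero, mul_zero]
    nlinarith [le_abs_self (u x - u (x + t • -G))]
  have h1 : (1 : ℝ) ∈ posTangentConeAt (Ici (0 : ℝ)) 0 :=
    mem_posTangentConeAt_of_segment_subset
      (by rw [zero_add, segment_eq_Icc zero_le_one]; exact Icc_subset_Ici_self)
  have := hmin.hasFDerivWithinAt_nonneg hφ.hasFDerivAt.hasFDerivWithinAt h1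
  simp only [ContinuousLinearMap.toSpanSingleton_apply, one_smul] at this
  nlinarith [norm_nonneg G, K.coe_nonneg]

lemma norm_le_of_isLocalMin_sub (hu : LipschitzWith K u) (hψ : HasGradientAt ψ G x)
    (hmin : IsLocalMin (fun y => u y - ψ y) x) : ‖G‖ ≤ K := by
  have hψ' : HasGradientAt (fun y => -ψ y) (-G) x := by
    rw [hasGradientAt_iff_hasFDerivAt, map_neg]
    exact hψ.hasFDerivAt.neg
  rw [← norm_neg]
  exact norm_le_of_isLocalMax_sub hu.neg hψ'
    (hmin.neg.congr (by simp [sub_eq_add_neg, add_comm]))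

end LipschitzGradient

section Hamiltonian

variable {n m : ℕ} {Ξ : Type*} [TopologicalSpace Ξ] [CompactSpace Ξ]
  {g : Fin m → Euc n × Ξ → Euc n} {L : Fin m → Euc n × Ξ → ℝ} {i : Fin m}

lemma bddAbove_ham (hg : Continuous (g i)) (hL : Continuous (L i)) (x p : Euc n) :
    BddAbove (range fun ξ : Ξ => -⟪g i (x, ξ), p⟫ - L i (x, ξ)) :=
  (isCompact_range (by fun_prop)).bddAbove

lemma ham_le_ham_add [Nonempty Ξ] (hg : Continuous (g i)) (hL : Continuous (L i))
    {x y p : Euc n} {a b : ℝ} (hga : ∀ ξ, ‖g i (x, ξ) - g i (y, ξ)‖ ≤ a)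
    (hLb : ∀ ξ, |L i (x, ξ) - L i (y, ξ)| ≤ b) :
    ham g L i x p ≤ ham g L i y p + (a * ‖p‖ + b) := by
  refine ciSup_le fun ξ => ?_
  have hinner : |⟪g i (x, ξ) - g i (y, ξ), p⟫| ≤ a * ‖p‖ :=
    (abs_real_inner_le_norm _ _).trans (mul_le_mul_of_nonneg_right (hga ξ) (norm_nonneg p))
  have : -⟪g i (y, ξ), p⟫ - L i (y, ξ) ≤ ham g L i y p := le_ciSup (bddAbove_ham hg hL y p) ξ
  rw [inner_sub_left] at hinner
  linarith [abs_le.1 hinner, abs_le.1 (hLb ξ)]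

end Hamiltonian

lemma abs_sum_mul_le {ι : Type*} [Fintype ι] {a b : ι → ℝ} {α β : ℝ} (ha : ∀ i, |a i| ≤ α)
    (hb : ∀ i, |b i| ≤ β) : |∑ i, a i * b i| ≤ Fintype.card ι * (α * β) := by
  refine (Finset.abs_sum_le_sum_abs _ _).trans ?_
  rw [← nsmul_eq_mul]
  refine Finset.sum_le_card_nsmul _ _ _ fun i _ => ?_
  rw [abs_mul]
  exact mul_le_mul (ha i) (hb i) (abs_nonneg _) ((abs_nonneg _).trans (ha i))

namespace IsMonotoneMat

variable {m : ℕ} {M : Matrix (Fin m) (Fin m) ℝ}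

lemma sum_row_nonneg (hM : IsMonotoneMat M) (k : Fin m) : 0 ≤ ∑ j, M k j := by
  simpa using hM (fun _ => 1) k (fun _ => le_rfl) zero_le_one

lemma sum_mul_le (hM : IsMonotoneMat M) {u w : Fin m → ℝ} {k : Fin m}
    (hmax : ∀ j, u j - w j ≤ u k - w k) (hk : w k ≤ u k) :
    ∑ j, M k j * w j ≤ ∑ j, M k j * u j := by
  have := hM (u - w) k hmax (sub_nonneg.2 hk)
  simp only [Pi.sub_apply, mul_sub, Finset.sum_sub_distrib] at this
  linarith

end IsMonotoneMat

section Comparison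

variable {n m : ℕ} {Ξ : Type*}
  {g : Fin m → Euc n × Ξ → Euc n} {L : Fin m → Euc n × Ξ → ℝ}
  {B : Euc n → Matrix (Fin m) (Fin m) ℝ} {lam : ℝ} {c : Fin m → ℝ} {u w : Fin m → Euc n → ℝ}
  {ε : ℝ} {k : Fin m} {x₀ y₀ : Euc n}

lemma exists_uniform_modulus [MetricSpace Ξ] [CompactSpace Ξ] (hgL : GoodData g L)
    (hB : GoodCoupling B) {τ : ℝ} (hτ : 0 < τ) :
    ∃ δ > 0, ∀ x y : Euc n, ‖x - y‖ < δ → ∀ k ξ, (∀ j, |B x k j - B y k j| ≤ τ) ∧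
      ‖g k (x, ξ) - g k (y, ξ)‖ ≤ τ ∧ |L k (x, ξ) - L k (y, ξ)| ≤ τ := by
  set F : Euc n × Ξ → (Fin m → Fin m → ℝ) × (Fin m → Euc n) × (Fin m → ℝ) :=
    fun q => (fun i j => B q.1 i j, fun k => g k q, fun k => L k q)
  have hFc : Continuous F :=
    .prodMk (continuous_pi fun i => continuous_pi fun j => (hB.1 i j).1.comp continuous_fst)
      (.prodMk (continuous_pi fun k => (hgL.1 k).1) (continuous_pi fun k => (hgL.2 k).1))
  have hFp : TorusFun2 F := fun x z ξ hz => by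
    simp only [F, (hB.1 _ _).2 x z hz, (hgL.1 _).2 x z ξ hz, (hgL.2 _).2 x z ξ hz]
  obtain ⟨δ, hδ, hFδ⟩ := Metric.uniformContinuous_iff.1 (hFp.uniformContinuous hFc) τ hτ
  refine ⟨δ, hδ, fun x y hxy k ξ => ?_⟩
  have h := (hFδ (a := (x, ξ)) (b := (y, ξ)) (by simpa [Prod.dist_eq, dist_eq_norm] using hxy)).le
  simp only [F, Prod.dist_eq, max_le_iff] at h
  obtain ⟨hBd, hgd, hLd⟩ := h
  refine ⟨fun j => ?_, ?_, ?_⟩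
  · have := (dist_le_pi_dist (fun j => B x k j) (fun j => B y k j) j).trans
      ((dist_le_pi_dist (fun i j => B x i j) (fun i j => B y i j) k).trans hBd)
    rwa [Real.dist_eq] at this
  · have := (dist_le_pi_dist (fun k => g k (x, ξ)) (fun k => g k (y, ξ)) k).trans hgd
    rwa [dist_eq_norm] at this
  · have := (dist_le_pi_dist (fun k => L k (x, ξ)) (fun k => L k (y, ξ)) k).trans hLd
    rwa [Real.dist_eq] at this

def IsDoubledMax (u w : Fin m → Euc n → ℝ) (ε : ℝ) (k : Fin m) (x₀ y₀ : Euc n) : Prop :=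
  ∀ j x y, u j x - w j y - Phi n (x - y) / ε ≤ u k x₀ - w k y₀ - Phi n (x₀ - y₀) / ε

lemma IsDoubledMax.isLocalMax (hmax : IsDoubledMax u w ε k x₀ y₀) :
    IsLocalMax (fun x => u k x - Phi n (x - y₀) / ε) x₀ :=
  .of_forall fun x => by have := hmax k x y₀; dsimp only; linarith

lemma IsDoubledMax.isLocalMin (hmax : IsDoubledMax u w ε k x₀ y₀) :
    IsLocalMin (fun y => w k y - -(Phi n (y - x₀) / ε)) y₀ :=
  .of_forall fun y => by
    have := hmax k x₀ y
    dsimp only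
    rw [← Phi_neg (y - x₀), ← Phi_neg (y₀ - x₀), neg_sub, neg_sub]
    linarith

lemma IsDoubledMax.norm_sub_lt (hmax : IsDoubledMax u w ε k x₀ y₀) {M δ : ℝ}
    (hM : ∀ x, |w k x| ≤ M) (hε : 0 < ε) (hδ : 0 < δ) (hεδ : 2 * M * ε < 8 * δ ^ 2)
    (hcell : x₀ - y₀ ∈ fundamentalCell n) :
    ‖x₀ - y₀‖ < δ := by
  refine norm_lt_of_Phi_lt hcell hδ ?_
  have := hmax k x₀ x₀
  simp only [sub_self, Phi_zero, zero_div, sub_zero] at this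
  have : Phi n (x₀ - y₀) ≤ ε * (2 * M) := by
    rw [← div_le_iff₀' hε]
    linarith [abs_le.1 (hM x₀), abs_le.1 (hM y₀)]
  linarith

lemma IsDoubledMax.norm_smul_gradPhi_le (hmax : IsDoubledMax u w ε k x₀ y₀) {K : NNReal}
    (hK : (∀ i, LipschitzWith K (u i)) ∨ ∀ i, LipschitzWith K (w i)) :
    ‖ε⁻¹ • gradPhi n (x₀ - y₀)‖ ≤ K :=
  hK.elim
    (fun h => norm_le_of_isLocalMax_sub (h k) (hasGradientAt_Phi_sub_div x₀ y₀ ε) hmax.isLocalMax)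
    (fun h => norm_le_of_isLocalMin_sub (h k) (hasGradientAt_neg_Phi_sub_div x₀ y₀ ε)
      hmax.isLocalMin)

/-- The viscosity inequalities at `x₀` and `y₀` share the gradient `∇Φ(x₀ - y₀)/ε`; monotonicity
of `B(x₀)` compares the coupling terms. -/
lemma IsDoubledMax.lam_mul_sub_le (hmax : IsDoubledMax u w ε k x₀ y₀)
    (hu : IsSubsol B lam g L c u) (hw : IsSupersol B lam g L c w)
    (hB : ∀ x, IsMonotoneMat (B x)) (hk : w k y₀ ≤ u k x₀) :
    lam * (u k x₀ - w k y₀) ≤ (∑ j, B y₀ k j * w j y₀ - ∑ j, B x₀ k j * w j y₀) +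
      (ham g L k y₀ (ε⁻¹ • gradPhi n (x₀ - y₀)) - ham g L k x₀ (ε⁻¹ • gradPhi n (x₀ - y₀))) := by
  have hsub := hu.2 k _ (contDiff_comp_Phi_sub (h := (· / ε)) y₀ fun s _ => by fun_prop)
    (torusFun_comp_Phi_sub (h := (· / ε)) y₀) x₀ hmax.isLocalMax
  have hsup := hw.2 k _
    (contDiff_comp_Phi_sub (h := fun s => -(s / ε)) x₀ fun s _ => by fun_prop)
    (torusFun_comp_Phi_sub (h := fun s => -(s / ε)) x₀) y₀ hmax.isLocalMin
  rw [(hasGradientAt_Phi_sub_div x₀ y₀ ε).gradient] at hsub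
  rw [(hasGradientAt_neg_Phi_sub_div x₀ y₀ ε).gradient] at hsup
  have hmono := (hB x₀).sum_mul_le (u := fun j => u j x₀) (w := fun j => w j y₀) (k := k)
    (fun j => by have := hmax j x₀ y₀; linarith) hk
  linarith

/-- Doubling the variables with the periodic penalty `Φ(x - y)/ε`; the Lipschitz bound on one
side keeps the common gradient `∇Φ(x₀ - y₀)/ε` of the two test functions bounded, so the
Hamiltonians at `x₀` and `y₀` differ by little once `x₀ - y₀` is small. -/
theorem IsSubsol.le_of_isSupersol [MetricSpace Ξ] [CompactSpace Ξ] [Nonempty Ξ]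
    (hu : IsSubsol B lam g L c u) (hw : IsSupersol B lam g L c w)
    (huc : ∀ i, Continuous (u i)) (hwc : ∀ i, Continuous (w i)) (hgL : GoodData g L)
    (hB : GoodCoupling B) (hlam : 0 < lam) {K : NNReal}
    (hK : (∀ i, LipschitzWith K (u i)) ∨ ∀ i, LipschitzWith K (w i)) (i : Fin m) (x : Euc n) :
    u i x ≤ w i x := by
  by_contra! hwu
  have : Nonempty (Fin m) := ⟨i⟩
  set S := u i x - w i x
  have hS0 : 0 < S := sub_pos.2 hwu
  obtain ⟨M, hM0, hM⟩ := exists_abs_le_of_torusFun hwc fun j => (hw.1 j).2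
  set τ := lam * S / (2 * (m * M + K + 1))
  have hτ : 0 < τ := by positivity
  obtain ⟨δ, hδ, hmod⟩ := exists_uniform_modulus hgL hB hτ
  set ε := 4 * δ ^ 2 / (M + 1)
  have hε : 0 < ε := by positivity
  obtain ⟨k, x₀, y₀, hcell, hmax⟩ : ∃ k x₀ y₀, x₀ - y₀ ∈ fundamentalCell n ∧
      IsDoubledMax u w ε k x₀ y₀ := exists_max_doubled
    (F := fun j x y => u j x - w j y - Phi n (x - y) / ε)
    (fun j => (((huc j).comp continuous_fst).sub ((hwc j).comp continuous_snd)).sub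
      ((contDiff_Phi.continuous.comp (continuous_fst.sub continuous_snd)).div_const ε))
    (fun j x y z hz => by
      simp only [(hu.1 j).2 x z hz, show x + z - y = x - y + z by abel, torusFun_Phi _ z hz])
    (fun j x y z hz => by
      simp only [(hw.1 j).2 y z hz, show x - (y + z) = x - y + -z by abel,
        torusFun_Phi _ _ hz.neg])
  have hS : S ≤ u k x₀ - w k y₀ := by
    have := hmax i x x
    simp only [sub_self, Phi_zero, zero_div, sub_zero] at this
    linarith [div_nonneg (Phi_nonneg (x₀ - y₀)) hε.le]
  have hclose := hmax.norm_sub_lt (hM k) hε hδ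
    (by rw [mul_div_assoc', div_lt_iff₀ (by positivity)]; nlinarith) hcell
  set p := ε⁻¹ • gradPhi n (x₀ - y₀)
  have hp : ‖p‖ ≤ K := hmax.norm_smul_gradPhi_le hK
  have hBdiff : ∑ j, B y₀ k j * w j y₀ - ∑ j, B x₀ k j * w j y₀ ≤ m * (τ * M) := by
    have := abs_sum_mul_le (a := fun j => B y₀ k j - B x₀ k j) (b := fun j => w j y₀) (α := τ)
      (fun j => abs_sub_comm (B x₀ k j) _ ▸ (hmod x₀ y₀ hclose k (Classical.arbitrary Ξ)).1 j)
      fun j => hM j y₀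
    simp only [sub_mul, Finset.sum_sub_distrib, Fintype.card_fin] at this
    exact (le_abs_self _).trans this
  have hH : ham g L k y₀ p ≤ ham g L k x₀ p + (τ * K + τ) :=
    (ham_le_ham_add (hgL.1 k).1 (hgL.2 k).1
      (fun ξ => norm_sub_rev (g k (x₀, ξ)) _ ▸ (hmod x₀ y₀ hclose k ξ).2.1)
      (fun ξ => abs_sub_comm (L k (x₀, ξ)) _ ▸ (hmod x₀ y₀ hclose k ξ).2.2)).trans (by gcongr)
  have hdoubling := hmax.lam_mul_sub_le hu hw hB.2 (by linarith)
  have hτS : τ * (m * M + K + 1) = lam * S / 2 := by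
    simp only [τ]; field_simp
  nlinarith [mul_le_mul_of_nonneg_left hS hlam.le]

end Comparison

section SmoothCone

variable {n : ℕ} {A δ : ℝ} {y : Euc n}

/-- A periodic `C¹` smoothing of the cone `A |w - y|`. -/
noncomputable def smoothCone (A δ : ℝ) (y w : Euc n) : ℝ := A * (√(δ ^ 2 + Phi n (w - y)) - δ)

lemma contDiff_smoothCone (hδ : 0 < δ) : ContDiff ℝ 1 (smoothCone A δ y) :=
  contDiff_comp_Phi_sub (h := fun s => A * (√(δ ^ 2 + s) - δ)) y fun s hs =>
    contDiffAt_const.mul (((Real.contDiffAt_sqrt (by positivity)).comp s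
      (contDiffAt_const.add contDiffAt_id)).sub contDiffAt_const)

lemma torusFun_smoothCone : TorusFun (smoothCone A δ y) :=
  torusFun_comp_Phi_sub (h := fun s => A * (√(δ ^ 2 + s) - δ)) y

lemma smoothCone_nonneg (hA : 0 ≤ A) (hδ : 0 ≤ δ) (w : Euc n) : 0 ≤ smoothCone A δ y w := by
  refine mul_nonneg hA (sub_nonneg.2 (Real.le_sqrt hδ (by positivity [Phi_nonneg (w - y)]) |>.2 ?_))
  linarith [Phi_nonneg (w - y)]

lemma smoothCone_le (hA : 0 ≤ A) (hδ : 0 ≤ δ) (w : Euc n) :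
    smoothCone A δ y w ≤ 5 * A * ‖w - y‖ := by
  have hsqrt : √(δ ^ 2 + Phi n (w - y)) ≤ δ + 5 * ‖w - y‖ := by
    have hπ : π ^ 2 < 10 := by nlinarith [Real.pi_lt_d2, Real.pi_pos]
    refine Real.sqrt_le_iff.2 ⟨by positivity, ?_⟩
    nlinarith [Phi_le (w - y), mul_nonneg hδ (norm_nonneg (w - y)), sq_nonneg ‖w - y‖]
  unfold smoothCone
  nlinarith

lemma half_le_smoothCone (hA : 0 ≤ A) (hδ : δ ≤ 1 / 5) {w : Euc n}
    (hw : 1 / 2 < Phi n (w - y)) : A / 2 ≤ smoothCone A δ y w := by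
  have : 7 / 10 ≤ √(δ ^ 2 + Phi n (w - y)) :=
    (Real.le_sqrt (by norm_num) (by positivity [Phi_nonneg (w - y)])).2 (by nlinarith)
  unfold smoothCone
  nlinarith

lemma le_norm_gradient_smoothCone (hA : 0 ≤ A) (hδ : 0 < δ) {x : Euc n}
    (h₁ : δ ^ 2 < Phi n (x - y)) (h₂ : Phi n (x - y) ≤ 1) :
    A ≤ ‖gradient (smoothCone A δ y) x‖ := by
  set s := δ ^ 2 + Phi n (x - y)
  have hs : 0 < s := add_pos_of_pos_of_nonneg (by positivity) (Phi_nonneg _)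
  have hd : HasDerivAt (fun t => A * (√(δ ^ 2 + t) - δ)) (A * (1 / (2 * √s))) (Phi n (x - y)) :=
    ((((hasDerivAt_id _).const_add (δ ^ 2)).sqrt hs.ne').sub_const δ).const_mul A
  have hgrad : HasGradientAt (smoothCone A δ y) ((A * (1 / (2 * √s))) • gradPhi n (x - y)) x :=
    hasGradientAt_comp_Phi_sub y hd
  rw [hgrad.gradient, norm_smul, Real.norm_of_nonneg (mul_nonneg hA (by positivity))]
  have hG : 2 * √s ≤ ‖gradPhi n (x - y)‖ := by
    rw [← Real.sqrt_sq (norm_nonneg (gradPhi n (x - y))), show (2 : ℝ) = √(2 ^ 2) by simp,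
      ← Real.sqrt_mul (by norm_num)]
    refine Real.sqrt_le_sqrt ?_
    have hπ : 9 < π ^ 2 := by nlinarith [Real.pi_gt_three]
    nlinarith [four_pi_sq_mul_Phi_le h₂, mul_le_mul_of_nonneg_right hπ.le (Phi_nonneg (x - y)),
      show s = δ ^ 2 + Phi n (x - y) from rfl]
  have hs' : 0 < 2 * √s := by positivity
  calc A = A * (1 / (2 * √s)) * (2 * √s) := by field_simp
    _ ≤ A * (1 / (2 * √s)) * ‖gradPhi n (x - y)‖ := by gcongr

end SmoothCone

/-- A periodic function whose viscosity gradient is bounded by `R` is Lipschitz: test against the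
smoothed cone `smoothCone (R + 4C) δ y`. Near `y` (modulo `ℤⁿ`) continuity of `f` decides, at
intermediate distance the cone is too steep to touch `f` from above, and far away it exceeds
the oscillation `2C` of `f`. -/
theorem lipschitzWith_of_norm_gradient_lt {n : ℕ} {f : Euc n → ℝ} (hc : Continuous f)
    (hp : TorusFun f) {C R : ℝ} (hR : 0 < R) (hC : ∀ x, |f x| ≤ C)
    (hgrad : ∀ ψ, ContDiff ℝ 1 ψ → TorusFun ψ → ∀ x, IsLocalMax (fun y => f y - ψ y) x →
      ‖gradient ψ x‖ < R) :
    LipschitzWith (5 * (R + 4 * C)).toNNReal f := by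
  have hC0 : 0 ≤ C := (abs_nonneg _).trans (hC 0)
  set A := R + 4 * C
  have hA : 0 ≤ A := by positivity
  refine LipschitzWith.of_le_add_mul _ fun x y => ?_
  rw [Real.coe_toNNReal _ (by positivity), dist_eq_norm]
  refine le_of_forall_pos_le_add fun ρ hρ => ?_
  obtain ⟨δ₀, hδ₀, hcont⟩ := Metric.continuous_iff.1 hc y ρ hρ
  set δ := min (δ₀ / 2) (1 / 5)
  have hδ : 0 < δ := by positivity
  obtain ⟨x₀, hx₀⟩ := (show TorusFun fun w => f w - smoothCone A δ y w from fun w z hz => by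
    simp only [hp w z hz, torusFun_smoothCone w z hz]).exists_forall_le
      (hc.sub (contDiff_smoothCone hδ).continuous)
  have hx₀y : f x₀ - smoothCone A δ y x₀ ≤ f y + ρ := by
    rcases le_or_gt (Phi n (x₀ - y)) (δ ^ 2) with hnear | hmid
    · obtain ⟨z, hz, hcell⟩ := exists_isIntVec_add_mem_fundamentalCell (x₀ - y)
      have hz' : ‖x₀ + z - y‖ < δ := by
        rw [add_sub_right_comm]
        refine norm_lt_of_Phi_lt hcell hδ ?_
        rw [torusFun_Phi _ z hz]
        nlinarith
      have := hcont (x₀ + z) (by rw [dist_eq_norm]; linarith [min_le_left (δ₀ / 2) (1 / 5)])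
      rw [Real.dist_eq, hp x₀ z hz] at this
      linarith [(abs_lt.1 this).2, smoothCone_nonneg hA hδ.le (y := y) x₀]
    rcases le_or_gt (Phi n (x₀ - y)) (1 / 2) with hmid' | hfar
    · exact absurd (hgrad _ (contDiff_smoothCone hδ) torusFun_smoothCone x₀ (.of_forall hx₀))
        (not_lt.2 ((le_add_of_nonneg_right (by positivity)).trans
          (le_norm_gradient_smoothCone hA hδ hmid (by linarith))))
    · linarith [half_le_smoothCone hA (min_le_right (δ₀ / 2) (1 / 5)) hfar, abs_le.1 (hC x₀),
        abs_le.1 (hC y)]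
  linarith [hx₀ x, smoothCone_le hA hδ.le (y := y) x]

section Bounds

variable {n m : ℕ} {Ξ : Type*} {g : Fin m → Euc n × Ξ → Euc n} {L : Fin m → Euc n × Ξ → ℝ}
  {B : Euc n → Matrix (Fin m) (Fin m) ℝ} {lam C : ℝ} {c : Fin m → ℝ} {v : Fin m → Euc n → ℝ}

lemma Coercive.exists_uniform (hcoer : Coercive g L) (M : ℝ) :
    ∃ R > 0, ∀ i x p, R ≤ ‖p‖ → M ≤ ham g L i x p := by
  choose R hR using fun i => hcoer i M
  refine ⟨1 + ∑ i, |R i|, by positivity, fun i x p hp => hR i p ?_ x⟩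
  have := Finset.single_le_sum (fun j _ => abs_nonneg (R j)) (Finset.mem_univ i)
  linarith [le_abs_self (R i)]

lemma IsSubsol.norm_gradient_lt (hv : IsSubsol B lam g L (fun _ => 0) v) (hlam : lam ∈ Icc 0 1)
    (hC : ∀ i x, |v i x| ≤ C) {β : ℝ} (hβ : ∀ x i j, |B x i j| ≤ β) {R : ℝ}
    (hR : ∀ i x p, R ≤ ‖p‖ → C + m * (β * C) + 1 ≤ ham g L i x p) {i : Fin m} {ψ : Euc n → ℝ}
    (hψ : ContDiff ℝ 1 ψ) (hψp : TorusFun ψ) {x : Euc n}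
    (hx : IsLocalMax (fun y => v i y - ψ y) x) : ‖gradient ψ x‖ < R := by
  by_contra! h
  have hsub := hv.2 i ψ hψ hψp x hx
  have hlamv : |lam * v i x| ≤ C := by
    rw [abs_mul, abs_of_nonneg hlam.1]
    nlinarith [hC i x, abs_nonneg (v i x), hlam.2]
  have hsum := abs_sum_mul_le (fun j => hβ x i j) fun j => hC j x
  rw [Fintype.card_fin] at hsum
  linarith [hR i x _ h, abs_le.1 hlamv, abs_le.1 hsum]

lemma IsSupersol.add_const (hv : IsSupersol B 0 g L c v) (hB : ∀ x, IsMonotoneMat (B x))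
    (hlam : 0 ≤ lam) (hC : 0 ≤ C) (hvC : ∀ i x, 0 ≤ v i x + C) :
    IsSupersol B lam g L c fun i x => v i x + C := by
  refine ⟨fun i => ⟨(hv.1 i).1.add lowerSemicontinuous_const,
    fun x z hz => by simp only [(hv.1 i).2 x z hz]⟩, fun i ψ hψ hψp x hmin => ?_⟩
  have h := hv.2 i ψ hψ hψp x
    (Filter.Eventually.mono hmin fun y hy => by dsimp only at hy ⊢; linarith)
  have hsum : ∑ j, B x i j * (v j x + C) = ∑ j, B x i j * v j x + (∑ j, B x i j) * C := by
    simp only [mul_add, Finset.sum_add_distrib, Finset.sum_mul]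
  rw [hsum]
  nlinarith [mul_nonneg ((hB x).sum_row_nonneg i) hC, mul_nonneg hlam (hvC i x)]

lemma IsSubsol.sub_const (hv : IsSubsol B 0 g L c v) (hB : ∀ x, IsMonotoneMat (B x))
    (hlam : 0 ≤ lam) (hC : 0 ≤ C) (hvC : ∀ i x, v i x - C ≤ 0) :
    IsSubsol B lam g L c fun i x => v i x - C := by
  refine ⟨fun i => ⟨(hv.1 i).1.add upperSemicontinuous_const,
    fun x z hz => by simp only [(hv.1 i).2 x z hz]⟩, fun i ψ hψ hψp x hmax => ?_⟩
  have h := hv.2 i ψ hψ hψp x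
    (Filter.Eventually.mono hmax fun y hy => by dsimp only at hy ⊢; linarith)
  have hsum : ∑ j, B x i j * (v j x - C) = ∑ j, B x i j * v j x - (∑ j, B x i j) * C := by
    simp only [mul_sub, Finset.sum_sub_distrib, Finset.sum_mul]
  rw [hsum]
  nlinarith [mul_nonneg ((hB x).sum_row_nonneg i) hC, mul_nonneg hlam (neg_nonneg.2 (hvC i x))]

lemma abs_le_of_isSol [MetricSpace Ξ] [CompactSpace Ξ] [Nonempty Ξ] (hgL : GoodData g L)
    (hB : GoodCoupling B) {v₀ : Fin m → Euc n → ℝ} (hv₀ : IsSol B 0 g L c v₀) {K : NNReal}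
    (hK : ∀ i, LipschitzWith K (v₀ i)) (hC : ∀ i x, |v₀ i x| ≤ C) (hlam : 0 < lam)
    (hv : IsSol B lam g L c v) (i : Fin m) (x : Euc n) : |v i x| ≤ 2 * C := by
  have hC0 : 0 ≤ C := (abs_nonneg _).trans (hC i x)
  have hup := hv.2.1.le_of_isSupersol
    (hv₀.2.2.add_const hB.2 hlam.le hC0 fun j y => by linarith [abs_le.1 (hC j y)])
    hv.1 (fun j => (hv₀.1 j).add continuous_const) hgL hB hlam
    (Or.inr fun j => by simpa using (hK j).add (LipschitzWith.const C)) i x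
  have hlow := (hv₀.2.1.sub_const hB.2 hlam.le hC0 fun j y => by linarith [abs_le.1 (hC j y)]
    ).le_of_isSupersol hv.2.2 (fun j => (hv₀.1 j).sub continuous_const) hv.1 hgL hB hlam
    (Or.inl fun j => by simpa [sub_eq_add_neg] using (hK j).add (LipschitzWith.const (-C))) i x
  rw [abs_le]
  constructor <;> linarith [abs_le.1 (hC i x)]

end Bounds

lemma exists_lipschitzWith_forall {ι α β : Type*} [Fintype ι] [PseudoEMetricSpace α]
    [PseudoEMetricSpace β] {f : ι → α → β} (h : ∀ i, ∃ K, LipschitzWith K (f i)) :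
    ∃ K, ∀ i, LipschitzWith K (f i) := by
  choose K hK using h
  exact ⟨Finset.univ.sup K, fun i => (hK i).weaken (Finset.le_sup (Finset.mem_univ i))⟩

theorem stmt15_general {n m : ℕ}
    {Ξ : Type*} [MetricSpace Ξ] [CompactSpace Ξ] [Nonempty Ξ]
    (g : Fin m → Euc n × Ξ → Euc n) (L : Fin m → Euc n × Ξ → ℝ)
    (hgL : GoodData g L) (hcoer : Coercive g L)
    (B : Euc n → Matrix (Fin m) (Fin m) ℝ) (hB : GoodCoupling B)
    (hE : AssumptionE B g L)
    (v : ℝ → Fin m → Euc n → ℝ)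
    (hv : ∀ lam : ℝ, 0 < lam → IsSol B lam g L (fun _ => 0) (v lam)) :
    ∃ C1 : NNReal, 0 < C1 ∧ ∀ lam : ℝ, lam ∈ Set.Ioo (0:ℝ) 1 →
      ∀ i, LipschitzWith C1 (v lam i) := by
  obtain ⟨v₀, hv₀lip, hv₀⟩ := hE
  obtain ⟨K, hK⟩ := exists_lipschitzWith_forall hv₀lip
  obtain ⟨C, hC0, hC⟩ := exists_abs_le_of_torusFun hv₀.1 fun i => (hv₀.2.1.1 i).2
  obtain ⟨β, -, hβ⟩ := exists_abs_le_of_torusFun (u := fun (ij : Fin m × Fin m) x => B x ij.1 ij.2)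
    (fun ij => (hB.1 ij.1 ij.2).1) fun ij => (hB.1 ij.1 ij.2).2
  obtain ⟨R, hR0, hR⟩ := hcoer.exists_uniform (2 * C + m * (β * (2 * C)) + 1)
  refine ⟨(5 * (R + 4 * (2 * C))).toNNReal, Real.toNNReal_pos.2 (by positivity),
    fun lam hlam i => ?_⟩
  have hvl := hv lam hlam.1
  have hbound := abs_le_of_isSol hgL hB hv₀ hK hC hlam.1 hvl
  exact lipschitzWith_of_norm_gradient_lt (hvl.1 i) (hvl.2.1.1 i).2 hR0 (hbound i)
    fun ψ hψ hψp x hx => hvl.2.1.norm_gradient_lt ⟨hlam.1.le, hlam.2.le⟩ hbound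
      (fun x i j => hβ (i, j) x) hR hψ hψp hx

theorem stmt15 {n m : ℕ} (hn : 0 < n) (hm : 0 < m)
    {Ξ : Type*} [MetricSpace Ξ] [CompactSpace Ξ] [Nonempty Ξ]
    (g : Fin m → Euc n × Ξ → Euc n) (L : Fin m → Euc n × Ξ → ℝ)
    (hgL : GoodData g L) (hcoer : Coercive g L)
    (B : Euc n → Matrix (Fin m) (Fin m) ℝ) (hB : GoodCoupling B)
    (hE : AssumptionE B g L)
    (v : ℝ → Fin m → Euc n → ℝ)
    (hv : ∀ lam : ℝ, 0 < lam → IsSol B lam g L (fun _ => 0) (v lam)) :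
    ∃ C1 : NNReal, 0 < C1 ∧ ∀ lam : ℝ, lam ∈ Set.Ioo (0:ℝ) 1 →
      ∀ i, LipschitzWith C1 (v lam i) :=
  stmt15_general g L hgL hcoer B hB hE v hv
end
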